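/- arXiv:2003.13842 — 2 statements merged into one kernel-verified Lean document; each statement's English description precedes it below -/
import Mathlib

section
/- Let ε ∈ {−1, +1} and let x : I → ℝ² be a C⁴ curve parametrized by centro-affine arc length with sign ε, i.e. [x, x'] ≠ 0 and [x', x''] = ε[x, x'] on I, and set κ := [x'', x]/[x', x]. Then κ is twice differentiable and x'''' = (κ'' + 3κκ' − 2εκ + κ³) x' − ε(2κ' + κ² − ε) x at every s ∈ I. -/
open Real

namespace CentroAffine

/-- The planar cross product `[a,b] = a₁b₂ − a₂b₁`. -/
def br (a b : ℝ × ℝ) : ℝ := a.1 * b.2 - a.2 * b.1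

/-- The centro-affine invariant `ε = sign([ẋ,ẍ]/[x,ẋ])` of a parametrized plane curve. -/
noncomputable def caEps (x : ℝ → ℝ × ℝ) (p : ℝ) : ℝ :=
  Real.sign (br (deriv x p) (deriv (deriv x) p) / br (x p) (deriv x p))

/-- The centro-affine metric `g = sqrt(ε[ẋ,ẍ]/[x,ẋ])`. -/
noncomputable def caMetric (x : ℝ → ℝ × ℝ) (p : ℝ) : ℝ :=
  Real.sqrt (caEps x p * (br (deriv x p) (deriv (deriv x) p) / br (x p) (deriv x p)))

/-- The centro-affine curvature of a parametrized plane curve. -/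
noncomputable def caCurv (x : ℝ → ℝ × ℝ) (p : ℝ) : ℝ :=
  Real.sqrt (caEps x p * (br (x p) (deriv x p) / br (deriv x p) (deriv (deriv x) p))) *
    (br (x p) (deriv (deriv x) p) / br (x p) (deriv x p) +
      (br (x p) (deriv (deriv x) p) * br (deriv x p) (deriv (deriv x) p) -
        br (x p) (deriv x p) * br (deriv x p) (deriv (deriv (deriv x)) p)) /
      (2 * br (deriv x p) (deriv (deriv x) p) * br (x p) (deriv x p)))

end CentroAffine

open CentroAffine

private lemma cramer_key (ε : ℝ) (a b c : ℝ × ℝ) (κ : ℝ)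
    (hbr : br a b ≠ 0)
    (e1 : br b c = ε * br a b)
    (e2 : κ * br b a = br c a) :
    c = κ • b - ε • a := by
  have h1 : (c.1 - (κ * b.1 - ε * a.1)) * br a b = 0 := by
    unfold br at *; linear_combination (-a.1) * e1 + b.1 * e2
  have h2 : (c.2 - (κ * b.2 - ε * a.2)) * br a b = 0 := by
    unfold br at *; linear_combination (-a.2) * e1 + b.2 * e2
  have k1 := (mul_eq_zero.1 h1).resolve_right hbr
  have k2 := (mul_eq_zero.1 h2).resolve_right hbr
  rw [sub_eq_zero] at k1 k2
  have : c = (κ * b.1 - ε * a.1, κ * b.2 - ε * a.2) := Prod.ext k1 k2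
  rw [this]; simp [Prod.ext_iff]

/-- For a C⁴ curve parametrized by centro-affine arc length with sign `ε`,
with curvature `κ := [x'',x]/[x',x]`, `κ` is twice differentiable and
`x'''' = (κ'' + 3κκ' − 2εκ + κ³) x' − ε(2κ' + κ² − ε) x`. -/
theorem centroAffine_fourth_derivative_formula
    (ε : ℝ) (hε : ε = 1 ∨ ε = -1) (I : Set ℝ) (hI : IsOpen I)
    (x : ℝ → ℝ × ℝ) (hx : ContDiffOn ℝ 4 x I)
    (h1 : ∀ s ∈ I, br (x s) (deriv x s) ≠ 0)
    (h2 : ∀ s ∈ I, br (deriv x s) (deriv (deriv x) s) = ε * br (x s) (deriv x s))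
    (κ : ℝ → ℝ) (hκ : ∀ s, κ s = br (deriv (deriv x) s) (x s) / br (deriv x s) (x s)) :
    ∀ s ∈ I,
      DifferentiableAt ℝ κ s ∧ DifferentiableAt ℝ (deriv κ) s ∧
      deriv (deriv (deriv (deriv x))) s
        = (deriv (deriv κ) s + 3 * κ s * deriv κ s - 2 * ε * κ s + (κ s) ^ 3) • deriv x s
          - (ε * (2 * deriv κ s + (κ s) ^ 2 - ε)) • x s := by
  -- smoothness of the derivatives
  have hx1 : ContDiffOn ℝ 3 (deriv x) I := hx.deriv_of_isOpen hI (by norm_num)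
  have hx2 : ContDiffOn ℝ 2 (deriv (deriv x)) I := hx1.deriv_of_isOpen hI (by norm_num)
  -- nonvanishing of the reversed bracket
  have h1' : ∀ t ∈ I, br (deriv x t) (x t) ≠ 0 := by
    intro t ht
    have : br (deriv x t) (x t) = -br (x t) (deriv x t) := by unfold br; ring
    rw [this, neg_ne_zero]; exact h1 t ht
  -- κ is C² on I
  have hκfun : κ = fun t => br (deriv (deriv x) t) (x t) / br (deriv x t) (x t) :=
    funext hκ
  have hκC2 : ContDiffOn ℝ 2 κ I := by
    rw [hκfun]
    have hxC2 : ContDiffOn ℝ 2 x I := hx.of_le (by norm_num)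
    have hx1C2 : ContDiffOn ℝ 2 (deriv x) I := hx1.of_le (by norm_num)
    have hnum : ContDiffOn ℝ 2 (fun t => br (deriv (deriv x) t) (x t)) I := by
      unfold br
      exact (hx2.fst.mul hxC2.snd).sub (hx2.snd.mul hxC2.fst)
    have hden : ContDiffOn ℝ 2 (fun t => br (deriv x t) (x t)) I := by
      unfold br
      exact (hx1C2.fst.mul hxC2.snd).sub (hx1C2.snd.mul hxC2.fst)
    exact hnum.div hden h1'
  have hκ'C1 : ContDiffOn ℝ 1 (deriv κ) I := hκC2.deriv_of_isOpen hI (by norm_num)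
  -- pointwise differentiability
  have hdx : ∀ t ∈ I, DifferentiableAt ℝ x t := fun t ht =>
    ((hx.differentiableOn (by norm_num)).differentiableAt (hI.mem_nhds ht))
  have hdx1 : ∀ t ∈ I, DifferentiableAt ℝ (deriv x) t := fun t ht =>
    ((hx1.differentiableOn (by norm_num)).differentiableAt (hI.mem_nhds ht))
  have hdx2 : ∀ t ∈ I, DifferentiableAt ℝ (deriv (deriv x)) t := fun t ht =>
    ((hx2.differentiableOn (by norm_num)).differentiableAt (hI.mem_nhds ht))
  have hdκ : ∀ t ∈ I, DifferentiableAt ℝ κ t := fun t ht =>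
    ((hκC2.differentiableOn (by norm_num)).differentiableAt (hI.mem_nhds ht))
  have hdκ' : ∀ t ∈ I, DifferentiableAt ℝ (deriv κ) t := fun t ht =>
    ((hκ'C1.differentiableOn (by norm_num)).differentiableAt (hI.mem_nhds ht))
  -- the structural equation x'' = κ x' - ε x on I
  have key : ∀ t ∈ I, deriv (deriv x) t = κ t • deriv x t - ε • x t := by
    intro t ht
    refine cramer_key ε (x t) (deriv x t) (deriv (deriv x) t) (κ t) (h1 t ht) (h2 t ht) ?_
    rw [hκ t]
    exact div_mul_cancel₀ _ (h1' t ht)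
  -- the third derivative formula on I
  have key3 : ∀ t ∈ I, deriv (deriv (deriv x)) t
      = (deriv κ t + κ t ^ 2 - ε) • deriv x t - (ε * κ t) • x t := by
    intro t ht
    have hD : HasDerivAt (fun u => κ u • deriv x u - ε • x u)
        (κ t • deriv (deriv x) t + deriv κ t • deriv x t - ε • deriv x t) t := by
      exact ((hdκ t ht).hasDerivAt.smul (hdx1 t ht).hasDerivAt).sub
        (((hdx t ht).hasDerivAt).const_smul ε)
    have heq : deriv (deriv x) =ᶠ[nhds t] fun u => κ u • deriv x u - ε • x u := by
      filter_upwards [hI.mem_nhds ht] with u hu using key u hu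
    have hD' : HasDerivAt (deriv (deriv x))
        (κ t • deriv (deriv x) t + deriv κ t • deriv x t - ε • deriv x t) t :=
      hD.congr_of_eventuallyEq heq
    rw [hD'.deriv, key t ht]
    module
  intro s hs
  refine ⟨hdκ s hs, hdκ' s hs, ?_⟩
  -- the fourth derivative
  have hc : HasDerivAt (fun u => deriv κ u + κ u ^ 2 - ε)
      (deriv (deriv κ) s + 2 * κ s ^ 1 * deriv κ s) s :=
    ((hdκ' s hs).hasDerivAt.add ((hdκ s hs).hasDerivAt.pow 2)).sub_const ε
  have hc2 : HasDerivAt (fun u => ε * κ u) (ε * deriv κ s) s :=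
    (hdκ s hs).hasDerivAt.const_mul ε
  have hD : HasDerivAt (fun u => (deriv κ u + κ u ^ 2 - ε) • deriv x u - (ε * κ u) • x u)
      (((deriv κ s + κ s ^ 2 - ε) • deriv (deriv x) s
          + (deriv (deriv κ) s + 2 * κ s ^ 1 * deriv κ s) • deriv x s)
        - ((ε * κ s) • deriv x s + (ε * deriv κ s) • x s)) s :=
    (hc.smul (hdx1 s hs).hasDerivAt).sub (hc2.smul (hdx s hs).hasDerivAt)
  have heq : deriv (deriv (deriv x)) =ᶠ[nhds s]
      fun u => (deriv κ u + κ u ^ 2 - ε) • deriv x u - (ε * κ u) • x u := by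
    filter_upwards [hI.mem_nhds hs] with u hu using key3 u hu
  have hD' := hD.congr_of_eventuallyEq heq
  rw [hD'.deriv, key s hs]
  have h3 : (3 : ℝ) * κ s * deriv κ s = κ s * deriv κ s + 2 * κ s ^ 1 * deriv κ s := by ring
  match_scalars <;> ring
end

section
/- Let ε ∈ {−1, +1}, let c : ℝ → ℝ be continuous and nonvanishing, let h : ℝ → ℝ be differentiable with h'(p) = 1/c(p) for all p, and let Ψ : ℝ → ℝ² be differentiable. Then C(p,t) := e^{−εt}·Ψ(t + h(p)) satisfies the first-order system ε·c(p)·∂C/∂p − ε·∂C/∂t = C for all (p,t). -/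
/-- With `ε = ±1`, `c` continuous and nonvanishing, `h' = 1/c`, and `Ψ : ℝ → ℝ²`
differentiable, the function `C(p,t) := e^{−εt}·Ψ(t + h(p))` satisfies the first-order system
`ε·c(p)·C_p − ε·C_t = C`. -/
theorem centroAffine_heat_flow_explicit_solution
    (ε : ℝ) (hε : ε = 1 ∨ ε = -1)
    (c : ℝ → ℝ) (hc : Continuous c) (hc0 : ∀ p, c p ≠ 0)
    (h : ℝ → ℝ) (hh : ∀ p, HasDerivAt h (1 / c p) p)
    (Ψ : ℝ → ℝ × ℝ) (hΨ : Differentiable ℝ Ψ) :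
    ∀ p t : ℝ,
      (ε * c p) • deriv (fun q => Real.exp (-(ε * t)) • Ψ (t + h q)) p
        - ε • deriv (fun τ => Real.exp (-(ε * τ)) • Ψ (τ + h p)) t
      = Real.exp (-(ε * t)) • Ψ (t + h p) := by
  intro p t
  have hΨ' : ∀ x, HasDerivAt Ψ (deriv Ψ x) x := fun x => (hΨ x).hasDerivAt
  -- derivative in p
  have h1 : HasDerivAt (fun q => Real.exp (-(ε * t)) • Ψ (t + h q))
      (Real.exp (-(ε * t)) • ((1 / c p) • deriv Ψ (t + h p))) p := by
    have hq : HasDerivAt (fun q => t + h q) (1 / c p) p := by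
      simpa using (hh p).const_add t
    exact ((hΨ' (t + h p)).scomp p hq).const_smul (Real.exp (-(ε * t)))
  -- derivative in t
  have h2 : HasDerivAt (fun τ => Real.exp (-(ε * τ)) • Ψ (τ + h p))
      ((-ε * Real.exp (-(ε * t))) • Ψ (t + h p)
        + Real.exp (-(ε * t)) • deriv Ψ (t + h p)) t := by
    have he : HasDerivAt (fun τ : ℝ => Real.exp (-(ε * τ))) (-ε * Real.exp (-(ε * t))) t := by
      have : HasDerivAt (fun τ : ℝ => -(ε * τ)) (-ε) t := by
        exact ((hasDerivAt_id t).const_mul ε).neg.congr_deriv (by ring)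
      simpa [mul_comm] using this.exp
    have hg : HasDerivAt (fun τ => Ψ (τ + h p)) (deriv Ψ (t + h p)) t := by
      have : HasDerivAt (fun τ : ℝ => τ + h p) 1 t := (hasDerivAt_id t).add_const _
      exact ((hΨ' (t + h p)).scomp t this).congr_deriv (one_smul _ _)
    exact (he.smul hg).congr_deriv (add_comm _ _)
  rw [h1.deriv, h2.deriv]
  have hε2 : ε * ε = 1 := by rcases hε with h | h <;> rw [h] <;> norm_num
  have hcp := hc0 p
  rw [smul_smul, smul_smul, smul_add, smul_smul, smul_smul]
  have e1 : ε * c p * Real.exp (-(ε * t)) * (1 / c p) = ε * Real.exp (-(ε * t)) := by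
    field_simp
  have e2 : ε * (-ε * Real.exp (-(ε * t))) = -Real.exp (-(ε * t)) := by
    rw [show ε * (-ε * Real.exp (-(ε * t))) = -((ε*ε) * Real.exp (-(ε * t))) by ring, hε2]
    ring
  rw [e1, e2]
  module
end
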